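/- Define c_k := b_k·(k+2)² for k ≥ -1, where b_k is as defined. Then the sequence (|c_k|)_{k≥0} is strictly increasing, and moreover for all ℓ ≥ 2 and k ≥ 0 one has |c_{k+ℓ+3}/c_{k+ℓ}| ≥ |c_{k+3}/c_k|. -/

import Mathlib

/-!
Write `k = 3g + r`. Each `|b_k|` is `(6g-1)‼ / (24^g g!)` times a rational function of `g`, so
on each residue class `|c_{k+1} / c_k|` and `ρ(k) = |c_{k+3} / c_k|` are explicit rational
functions of `k`, and the strict growth of `|c_k|` is a polynomial inequality. The three branches
of `ρ` satisfy `ρ₀ ≤ ρ₁ ≤ ρ₂` pointwise, `ρ₂(k) ≤ ρ₀(k + 2)`, and `ρ₀` is increasing, so for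
`l ≥ 2` we get `ρ(k) ≤ ρ₂(k) ≤ ρ₀(k + 2) ≤ ρ₀(k + l) ≤ ρ(k + l)`.
-/

/-- The sequence b_k (k ≥ -1) from the paper:
b_{3g} = -(6g-1)!!/(24^g g!), b_{3g-1} = ((6g+1)/(6g-1))·(6g-1)!!/(24^g g!),
b_{3g-2} = (1/2)·(6g-5)!!/(24^{g-1} (g-1)!), with (-1)!! = 1. -/
def bInt (k : ℤ) : ℚ :=
  if k % 3 = 0 then
    -((6 * (k / 3) - 1).toNat.doubleFactorial : ℚ)
      / (24 ^ (k / 3).toNat * ((k / 3).toNat.factorial : ℚ))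
  else if k % 3 = 2 then
    ((6 * (((k + 1) / 3 : ℤ) : ℚ) + 1) / (6 * (((k + 1) / 3 : ℤ) : ℚ) - 1)) *
      (((6 * ((k + 1) / 3) - 1).toNat.doubleFactorial : ℚ)
        / (24 ^ ((k + 1) / 3).toNat * (((k + 1) / 3).toNat.factorial : ℚ)))
  else
    (1 / 2 : ℚ) * (((6 * ((k + 2) / 3) - 5).toNat.doubleFactorial : ℚ)
      / (24 ^ ((k + 2) / 3 - 1).toNat * (((k + 2) / 3 - 1).toNat.factorial : ℚ)))

/-- c_k := b_k · (k+2)² for k ≥ -1. -/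
def cInt (k : ℤ) : ℚ := bInt k * ((k : ℚ) + 2) ^ 2

open Nat

/-- `|b_{3g}|`. For `g = 0` the truncated `6 * 0 - 1 = 0` gives `0‼ = 1`, matching the
convention `(-1)‼ = 1`. -/
def bScale (g : ℕ) : ℚ := (6 * g - 1)‼ / (24 ^ g * g !)

lemma bScale_pos (g : ℕ) : 0 < bScale g := by
  have := doubleFactorial_pos (6 * g - 1)
  have := factorial_pos g
  unfold bScale
  positivity

lemma doubleFactorial_six_mul_add_one (g : ℕ) : (6 * g + 1)‼ = (6 * g + 1) * (6 * g - 1)‼ :=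
  doubleFactorial_add_one (6 * g)

lemma doubleFactorial_six_mul_add_five (g : ℕ) :
    (6 * g + 5)‼ = (6 * g + 5) * (6 * g + 3) * (6 * g + 1) * (6 * g - 1)‼ := by
  rw [doubleFactorial_add_two, doubleFactorial_add_two, doubleFactorial_six_mul_add_one]
  ring

lemma bScale_succ (g : ℕ) :
    bScale (g + 1) = bScale g * ((6 * g + 1) * (6 * g + 3) * (6 * g + 5) / (24 * (g + 1))) := by
  have hsub : 6 * (g + 1) - 1 = 6 * g + 5 := by omega
  have := factorial_pos g
  unfold bScale
  rw [hsub, doubleFactorial_six_mul_add_five, factorial_succ]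
  push_cast
  field_simp
  ring

lemma abs_bInt_three_mul (g : ℕ) : |bInt (3 * g)| = bScale g := by
  have hg : (3 * (g : ℤ)) / 3 = g := by omega
  have hsub : (6 * (g : ℤ) - 1).toNat = 6 * g - 1 := by omega
  rw [bInt, if_pos (by omega), hg, hsub, Int.toNat_natCast, neg_div, abs_neg,
    abs_of_nonneg (by positivity)]
  rfl

lemma abs_bInt_three_mul_add_one (g : ℕ) :
    |bInt (3 * g + 1)| = bScale g * ((6 * g + 1) / 2) := by
  have hg : (3 * (g : ℤ) + 1 + 2) / 3 = g + 1 := by omega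
  have hsub : (6 * ((g : ℤ) + 1) - 5).toNat = 6 * g + 1 := by omega
  rw [bInt, if_neg (by omega), if_neg (by omega), hg, hsub, add_sub_cancel_right,
    Int.toNat_natCast, doubleFactorial_six_mul_add_one, abs_of_nonneg (by positivity), bScale]
  push_cast
  ring

lemma abs_bInt_three_mul_add_two (g : ℕ) :
    |bInt (3 * g + 2)| = bScale g * ((6 * g + 1) * (6 * g + 3) * (6 * g + 7) / (24 * (g + 1))) := by
  have hg : (3 * (g : ℤ) + 2 + 1) / 3 = (g + 1 : ℕ) := by omega
  have hsub : (6 * ((g + 1 : ℕ) : ℤ) - 1).toNat = 6 * (g + 1) - 1 := by omega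
  have hpos : (0 : ℚ) < 6 * (g + 1 : ℕ) - 1 := by
    push_cast
    linarith [(g.cast_nonneg : (0 : ℚ) ≤ g)]
  rw [bInt, if_neg (by omega), if_pos (by omega), hg, hsub, Int.toNat_natCast, Int.cast_natCast]
  change |_ * bScale (g + 1)| = _
  rw [abs_mul, abs_div, abs_of_pos hpos, abs_of_pos (by positivity), abs_of_pos (bScale_pos _),
    bScale_succ]
  push_cast at hpos ⊢
  field_simp
  ring

lemma abs_cInt (k : ℤ) : |cInt k| = |bInt k| * (k + 2) ^ 2 := by
  rw [cInt, abs_mul, abs_sq]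

lemma abs_cInt_lt_abs_cInt_add_one (n : ℕ) : |cInt n| < |cInt (n + 1)| := by
  obtain ⟨g, rfl | rfl | rfl⟩ : ∃ g, n = 3 * g ∨ n = 3 * g + 1 ∨ n = 3 * g + 2 := ⟨n / 3, by omega⟩
  · push_cast
    rw [abs_cInt, abs_cInt, abs_bInt_three_mul, abs_bInt_three_mul_add_one, mul_assoc]
    refine mul_lt_mul_of_pos_left ?_ (bScale_pos g)
    rw [← sub_pos]
    push_cast
    ring_nf
    positivity
  · push_cast
    rw [abs_cInt, abs_cInt, add_assoc, one_add_one_eq_two, abs_bInt_three_mul_add_one,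
      abs_bInt_three_mul_add_two, mul_assoc, mul_assoc]
    refine mul_lt_mul_of_pos_left ?_ (bScale_pos g)
    rw [div_mul_eq_mul_div, div_mul_eq_mul_div, div_lt_div_iff₀ (by positivity) (by positivity),
      ← sub_pos]
    push_cast
    ring_nf
    positivity
  · have hn : 3 * (g : ℤ) + 2 + 1 = 3 * (g + 1 : ℕ) := by push_cast; ring
    push_cast
    rw [hn, abs_cInt, abs_cInt, abs_bInt_three_mul, abs_bInt_three_mul_add_two, bScale_succ,
      mul_assoc (bScale g), mul_assoc (bScale g)]
    refine mul_lt_mul_of_pos_left ?_ (bScale_pos g)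
    rw [div_mul_eq_mul_div, div_mul_eq_mul_div, div_lt_div_iff₀ (by positivity) (by positivity),
      ← sub_pos]
    push_cast
    ring_nf
    positivity

/-- `ratio₀ k`, `ratio₁ k` and `ratio₂ k` are `|c_{k+3} / c_k|` for `k ≡ 0, 1, 2 mod 3`. -/
def ratio₀ (x : ℚ) : ℚ :=
  (2 * x + 1) * (2 * x + 3) * (2 * x + 5) * (x + 5) ^ 2 / (8 * (x + 3) * (x + 2) ^ 2)

def ratio₁ (x : ℚ) : ℚ :=
  (2 * x + 1) * (2 * x + 3) * (2 * x + 5) * (x + 5) ^ 2 / (8 * (x + 2) * (x + 2) ^ 2)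

def ratio₂ (x : ℚ) : ℚ :=
  (2 * x + 1) * (2 * x + 5) * (2 * x + 9) * (x + 5) ^ 2 / (8 * (x + 4) * (x + 2) ^ 2)

lemma ratio₀_le_ratio₁ {x : ℚ} (hx : 0 ≤ x) : ratio₀ x ≤ ratio₁ x := by
  unfold ratio₀ ratio₁
  gcongr
  linarith

lemma ratio₁_le_ratio₂ {x : ℚ} (hx : 0 ≤ x) : ratio₁ x ≤ ratio₂ x := by
  unfold ratio₁ ratio₂
  rw [div_le_div_iff₀ (by positivity) (by positivity), ← sub_nonneg]
  ring_nf
  positivity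

lemma ratio₂_le_ratio₀_add_two {x : ℚ} (hx : 0 ≤ x) : ratio₂ x ≤ ratio₀ (x + 2) := by
  unfold ratio₀ ratio₂
  rw [div_le_div_iff₀ (by positivity) (by positivity), ← sub_nonneg]
  ring_nf
  positivity

lemma ratio₀_monotone : Monotone fun n : ℕ ↦ ratio₀ n := by
  refine monotone_nat_of_le_succ fun n ↦ ?_
  unfold ratio₀
  rw [div_le_div_iff₀ (by positivity) (by positivity), ← sub_nonneg]
  push_cast
  ring_nf
  positivity

lemma abs_cInt_div_three_mul (g : ℕ) :
    |cInt (3 * g + 3) / cInt (3 * g)| = ratio₀ (3 * g) := by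
  have hn : 3 * (g : ℤ) + 3 = 3 * (g + 1 : ℕ) := by push_cast; ring
  rw [abs_div, hn, abs_cInt, abs_cInt, abs_bInt_three_mul, abs_bInt_three_mul, bScale_succ,
    ratio₀]
  have := bScale_pos g
  push_cast
  field_simp
  ring

lemma abs_cInt_div_three_mul_add_one (g : ℕ) :
    |cInt (3 * g + 1 + 3) / cInt (3 * g + 1)| = ratio₁ (3 * g + 1) := by
  have hn : 3 * (g : ℤ) + 1 + 3 = 3 * (g + 1 : ℕ) + 1 := by push_cast; ring
  rw [abs_div, hn, abs_cInt, abs_cInt, abs_bInt_three_mul_add_one, abs_bInt_three_mul_add_one,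
    bScale_succ, ratio₁]
  have := bScale_pos g
  push_cast
  field_simp
  ring

lemma abs_cInt_div_three_mul_add_two (g : ℕ) :
    |cInt (3 * g + 2 + 3) / cInt (3 * g + 2)| = ratio₂ (3 * g + 2) := by
  have hn : 3 * (g : ℤ) + 2 + 3 = 3 * (g + 1 : ℕ) + 2 := by push_cast; ring
  rw [abs_div, hn, abs_cInt, abs_cInt, abs_bInt_three_mul_add_two, abs_bInt_three_mul_add_two,
    bScale_succ, ratio₂]
  have := bScale_pos g
  push_cast
  field_simp
  ring

lemma abs_cInt_div_mem_Icc (n : ℕ) :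
    |cInt (n + 3) / cInt n| ∈ Set.Icc (ratio₀ n) (ratio₂ n) := by
  have hn : (0 : ℚ) ≤ n := n.cast_nonneg
  obtain ⟨g, rfl | rfl | rfl⟩ : ∃ g, n = 3 * g ∨ n = 3 * g + 1 ∨ n = 3 * g + 2 := ⟨n / 3, by omega⟩
  all_goals push_cast at hn ⊢
  · rw [abs_cInt_div_three_mul]
    exact ⟨le_rfl, (ratio₀_le_ratio₁ hn).trans (ratio₁_le_ratio₂ hn)⟩
  · rw [abs_cInt_div_three_mul_add_one]
    exact ⟨ratio₀_le_ratio₁ hn, ratio₁_le_ratio₂ hn⟩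
  · rw [abs_cInt_div_three_mul_add_two]
    exact ⟨(ratio₀_le_ratio₁ hn).trans (ratio₁_le_ratio₂ hn), le_rfl⟩

/-- the sequence (|c_k|)_{k≥0} is strictly increasing, and for all
ℓ ≥ 2 and k ≥ 0 one has |c_{k+ℓ+3}/c_{k+ℓ}| ≥ |c_{k+3}/c_k|. -/
theorem stmt8 :
    (∀ k : ℤ, 0 ≤ k → |cInt k| < |cInt (k + 1)|) ∧
    (∀ k l : ℤ, 0 ≤ k → 2 ≤ l →
      |cInt (k + 3) / cInt k| ≤ |cInt (k + l + 3) / cInt (k + l)|) := by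
  refine ⟨fun k hk ↦ ?_, fun k l hk hl ↦ ?_⟩
  · lift k to ℕ using hk
    exact abs_cInt_lt_abs_cInt_add_one k
  · lift k to ℕ using hk
    lift l to ℕ using by omega
    have hkl := abs_cInt_div_mem_Icc (k + l)
    push_cast at hkl
    calc |cInt (k + 3) / cInt k| ≤ ratio₂ k := (abs_cInt_div_mem_Icc k).2
      _ ≤ ratio₀ (k + 2) := ratio₂_le_ratio₀_add_two k.cast_nonneg
      _ ≤ ratio₀ (k + l) := by exact_mod_cast ratio₀_monotone (by omega : k + 2 ≤ k + l)
      _ ≤ |cInt (k + l + 3) / cInt (k + l)| := hkl.1
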